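/- arXiv:1711.00274 — 7 statements merged into one kernel-verified Lean document; each statement's English description precedes it below -/
import Mathlib

section
/- The function Υ(μ,w) = Σ_{(a,b)∈Γ} log(1 + w_{(a,b)}) is a good containment function for ℋ: it is nonnegative, vanishes at points with w = 0, is continuously differentiable, has compact sublevel sets in E = 𝒫({1,…,q}) × [0,∞)^Γ, and satisfies sup_{(μ,w)∈E} ℋ((μ,w), ∇Υ(μ,w)) ≤ (e − 1)·Σ_{(a,b)∈Γ} sup_μ v(a,b,μ) < ∞. -/
/-- Directed edges on `{1,…,q}`. -/
abbrev Edge (q : ℕ) := {e : Fin q × Fin q // e.1 ≠ e.2}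

/-- The containment function `Υ(μ,w) = Σ log(1 + w_{(a,b)})`. -/
noncomputable def Upsilon {q : ℕ} (w : Edge q → ℝ) : ℝ :=
  ∑ e : Edge q, Real.log (1 + w e)

/-!
Each summand `log (1 + w_e)` is smooth and nonnegative for `w_e ≥ 0`, and `Υ w ≤ c` forces
every `w_e ≤ exp c - 1`, so the sublevel sets are closed and bounded in the `w`-coordinates
while the simplex factor is compact. The Hamiltonian bound holds termwise:
`0 ≤ exp (1 + w_e)⁻¹ - 1 ≤ e - 1` since `(1 + w_e)⁻¹ ∈ (0, 1]`, and
`v(e, μ) ≤ sup v(e, ·) < ∞` by continuity on the compact simplex.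
-/

open Real

namespace Upsilon

variable {q : ℕ}

lemma log_one_add_le {w : Edge q → ℝ} (hw : ∀ e, 0 ≤ w e) (e : Edge q) :
    log (1 + w e) ≤ Upsilon w :=
  Finset.single_le_sum (f := fun e => log (1 + w e))
    (fun e' _ => log_nonneg (by linarith [hw e'])) (Finset.mem_univ e)

lemma nonneg {w : Edge q → ℝ} (hw : ∀ e, 0 ≤ w e) : 0 ≤ Upsilon w :=
  Finset.sum_nonneg fun e _ => log_nonneg (by linarith [hw e])

@[simp]
lemma zero : Upsilon (0 : Edge q → ℝ) = 0 := by
  simp [Upsilon]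

lemma contDiffOn {n : WithTop ℕ∞} :
    ContDiffOn ℝ n (Upsilon (q := q)) {w | ∀ e, -1 < w e} :=
  ContDiffOn.sum fun e _ =>
    ((contDiff_const.add (contDiff_apply ℝ ℝ e)).contDiffOn).log fun w hw => by
      linarith [hw e]

lemma isCompact_sublevel (c : ℝ) :
    IsCompact {w : Edge q → ℝ | (∀ e, 0 ≤ w e) ∧ Upsilon w ≤ c} := by
  have hcont : ContinuousOn (Upsilon (q := q)) (Set.Ici 0) :=
    (contDiffOn (n := 0)).continuousOn.mono fun w (hw : ∀ e, 0 ≤ w e) e => by linarith [hw e]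
  have hclosed : IsClosed (Set.Ici 0 ∩ Upsilon ⁻¹' Set.Iic c) :=
    hcont.preimage_isClosed_of_isClosed isClosed_Ici isClosed_Iic
  refine (isCompact_Icc (a := 0) (b := fun _ => exp c - 1)).of_isClosed_subset hclosed ?_
  rintro w ⟨hw, hwc⟩
  refine ⟨fun e => hw e, fun e => ?_⟩
  have hlog : log (1 + w e) ≤ c := (log_one_add_le hw e).trans hwc
  linarith [(log_le_iff_le_exp (by linarith [hw e])).mp hlog]

end Upsilon

lemma exp_inv_one_add_sub_one_mem_Icc {x : ℝ} (hx : 0 ≤ x) :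
    exp (1 + x)⁻¹ - 1 ∈ Set.Icc 0 (exp 1 - 1) := by
  have hinv_le : (1 + x)⁻¹ ≤ 1 := inv_le_one_of_one_le₀ (by linarith)
  have hinv_nonneg : 0 ≤ (1 + x)⁻¹ := by positivity
  constructor
  · linarith [one_le_exp hinv_nonneg]
  · linarith [exp_le_exp.mpr hinv_le]

lemma sum_mul_exp_inv_one_add_sub_one_le {ι X : Type*} [Fintype ι] [TopologicalSpace X]
    [CompactSpace X] {v : ι → X → ℝ} (hv0 : ∀ i x, 0 ≤ v i x)
    (hvc : ∀ i, Continuous (v i)) (x : X) {w : ι → ℝ} (hw : ∀ i, 0 ≤ w i) :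
    ∑ i, v i x * (exp (1 + w i)⁻¹ - 1) ≤ (exp 1 - 1) * ∑ i, ⨆ y, v i y := by
  rw [Finset.mul_sum]
  refine Finset.sum_le_sum fun i _ => ?_
  obtain ⟨hexp_nonneg, hexp_le⟩ := exp_inv_one_add_sub_one_mem_Icc (hw i)
  have hv_le : v i x ≤ ⨆ y, v i y := le_ciSup (isCompact_range (hvc i)).bddAbove x
  calc v i x * (exp (1 + w i)⁻¹ - 1)
      ≤ (⨆ y, v i y) * (exp 1 - 1) :=
        mul_le_mul hv_le hexp_le hexp_nonneg ((hv0 i x).trans hv_le)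
    _ = (exp 1 - 1) * ⨆ y, v i y := mul_comm _ _

theorem stmt3_general (q : ℕ)
    (v : Edge q → stdSimplex ℝ (Fin q) → ℝ)
    (hv0 : ∀ e μ, 0 ≤ v e μ)
    (hvc : ∀ e, Continuous (v e)) :
    (∀ w : Edge q → ℝ, (∀ e, 0 ≤ w e) → 0 ≤ Upsilon w) ∧
    (Upsilon (fun _ : Edge q => (0 : ℝ)) = 0) ∧
    ContDiffOn ℝ 1 (Upsilon (q := q)) {w | ∀ e, 0 ≤ w e} ∧
    (∀ c : ℝ, IsCompact {x : (stdSimplex ℝ (Fin q)) × (Edge q → ℝ) |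
        (∀ e, 0 ≤ x.2 e) ∧ Upsilon x.2 ≤ c}) ∧
    (∀ (μ : stdSimplex ℝ (Fin q)) (w : Edge q → ℝ), (∀ e, 0 ≤ w e) →
      ∑ e : Edge q, v e μ * (Real.exp (1 + w e)⁻¹ - 1) ≤
        (Real.exp 1 - 1) * ∑ e : Edge q, ⨆ μ' : stdSimplex ℝ (Fin q), v e μ') := by
  refine ⟨fun w hw => Upsilon.nonneg hw, Upsilon.zero,
    Upsilon.contDiffOn.mono fun w hw e => by linarith [hw e], fun c => ?_,
    fun μ w hw => sum_mul_exp_inv_one_add_sub_one_le hv0 hvc μ hw⟩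
  convert (isCompact_univ (X := stdSimplex ℝ (Fin q))).prod
    (Upsilon.isCompact_sublevel (q := q) c) using 1
  ext x
  simp

/-- `Υ` is a good containment function for `ℋ`: nonnegative, vanishing at `w = 0`,
continuously differentiable, with compact sublevel sets in
`E = 𝒫({1,…,q}) × [0,∞)^Γ`, and
`sup_E ℋ((μ,w),∇Υ(μ,w)) ≤ (e-1)·Σ_{(a,b)} sup_μ v(a,b,μ)`. -/
theorem stmt3 (q : ℕ) (hq : 2 ≤ q)
    (v : Edge q → stdSimplex ℝ (Fin q) → ℝ)
    (hv0 : ∀ e μ, 0 ≤ v e μ)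
    (hvc : ∀ e, Continuous (v e)) :
    (∀ w : Edge q → ℝ, (∀ e, 0 ≤ w e) → 0 ≤ Upsilon w) ∧
    (Upsilon (fun _ : Edge q => (0 : ℝ)) = 0) ∧
    ContDiffOn ℝ 1 (Upsilon (q := q)) {w | ∀ e, 0 ≤ w e} ∧
    (∀ c : ℝ, IsCompact {x : (stdSimplex ℝ (Fin q)) × (Edge q → ℝ) |
        (∀ e, 0 ≤ x.2 e) ∧ Upsilon x.2 ≤ c}) ∧
    (∀ (μ : stdSimplex ℝ (Fin q)) (w : Edge q → ℝ), (∀ e, 0 ≤ w e) →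
      ∑ e : Edge q, v e μ * (Real.exp (1 + w e)⁻¹ - 1) ≤
        (Real.exp 1 - 1) * ∑ e : Edge q, ⨆ μ' : stdSimplex ℝ (Fin q), v e μ') :=
  stmt3_general q v hv0 hvc
end

section
/- Let X be a metric space, F : X × X → ℝ ∪ {−∞} bounded above, upper semicontinuous, with compact superlevel sets {F ≥ c} for every c ∈ ℝ, and let G : X × X → [0,∞] be lower semicontinuous with G(x,x) = 0 for all x. Then for each α > 0 there exist (x_α, y_α) maximizing F − αG over X × X; the family {(x_α,y_α)}_{α>0} is relatively compact; any limit point (x₀,y₀) as α → ∞ satisfies G(x₀,y₀) = 0 and F(x₀,y₀) = sup{F(x,y) : G(x,y) = 0}; and α·G(x_α,y_α) → 0 as α → ∞. -/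
/-!
Let `m α = max (F - α G)`, attained at `z_α` since `F - α G` is upper semicontinuous with compact
superlevel sets. As `G ≥ 0`, `m` is nonincreasing, and it is bounded below by
`S = sup {F | G = 0}`, so it converges. Comparing `m α` with the value of `F - α G` at `z_{2α}`
gives `α G(z_{2α}) ≤ m α - m (2α) → 0`, hence `α G(z_α) → 0` and `G(z_α) → 0`. A cluster point
lies in `{G = 0}` by lower semicontinuity of `G`, and `F(z_α) ≥ m α ≥ S` passes to it by upper
semicontinuity of `F`. All `z_α` lie in the compact set `{F ≥ S}`.
-/

open Filter Topology Set
open scoped ENNReal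

theorem exists_tendsto_of_antitoneOn_Ioi {m : ℝ → ℝ} {c : ℝ} (hm : AntitoneOn m (Ioi 0))
    (hc : ∀ α, 0 < α → c ≤ m α) : ∃ L, Tendsto m atTop (𝓝 L) := by
  have hpos : ∀ t : ℝ, max t 1 ∈ Ioi (0 : ℝ) := fun t => one_pos.trans_le (le_max_right t 1)
  have hanti : Antitone fun t => m (max t 1) := fun s t hst =>
    hm (hpos s) (hpos t) (max_le_max_right 1 hst)
  refine ⟨_, (tendsto_atTop_ciInf hanti ⟨c, ?_⟩).congr' ?_⟩
  · rintro _ ⟨t, rfl⟩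
    exact hc _ (hpos t)
  · filter_upwards [eventually_ge_atTop 1] with t ht
    rw [max_eq_left ht]

theorem tendsto_mul_zero_of_forall_sub_mul_le {f g : ℝ → ℝ} {c : ℝ} (hg : ∀ α, 0 ≤ g α)
    (hmax : ∀ α β, 0 < α → 0 < β → f β - α * g β ≤ f α - α * g α)
    (hc : ∀ α, 0 < α → c ≤ f α - α * g α) :
    Tendsto (fun α => α * g α) atTop (𝓝 0) := by
  set m := fun α => f α - α * g α
  have hanti : AntitoneOn m (Ioi 0) := fun α hα β _ hαβ => by
    have := hmax α β hα (lt_of_lt_of_le hα hαβ)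
    have := mul_le_mul_of_nonneg_right hαβ (hg β)
    simp only [m]
    linarith
  obtain ⟨L, hL⟩ := exists_tendsto_of_antitoneOn_Ioi hanti hc
  have hgap : Tendsto (fun α => m α - m (2 * α)) atTop (𝓝 0) := by
    simpa using hL.sub (hL.comp (tendsto_id.const_mul_atTop two_pos))
  have hhalf : Tendsto (fun α => α * g (2 * α)) atTop (𝓝 0) := by
    refine tendsto_of_tendsto_of_tendsto_of_le_of_le' tendsto_const_nhds hgap ?_ ?_
    · filter_upwards [eventually_gt_atTop 0] with α hα
      exact mul_nonneg hα.le (hg _)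
    · filter_upwards [eventually_gt_atTop 0] with α hα
      have := hmax α (2 * α) hα (by positivity)
      simp only [m]
      linarith
  have hdouble := (hhalf.const_mul 2).comp (tendsto_id.atTop_div_const two_pos)
  rw [mul_zero] at hdouble
  refine hdouble.congr fun β => ?_
  simp only [Function.comp_apply, id]
  rw [mul_div_cancel₀ β two_ne_zero]
  ring

theorem EReal.sub_coe_mul_coe_ennreal {a : EReal} {b : ℝ≥0∞} (ha : a ≠ ⊥) (ha' : a ≠ ⊤)
    (hb : b ≠ ⊤) (α : ℝ) : a - α * (b : EReal) = ((a.toReal - α * b.toReal : ℝ) : EReal) := by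
  lift a to ℝ using ⟨ha', ha⟩
  lift b to NNReal using hb
  simp only [EReal.toReal_coe, ENNReal.coe_toReal, EReal.coe_sub, EReal.coe_mul]
  norm_cast

theorem EReal.ne_bot_and_ne_top_of_coe_le_sub_mul {a : EReal} {b : ℝ≥0∞} {c α : ℝ} (hα : 0 < α)
    (h : (c : EReal) ≤ a - α * (b : EReal)) : a ≠ ⊥ ∧ b ≠ ⊤ := by
  constructor
  · rintro rfl
    simp at h
  · rintro rfl
    rw [EReal.coe_ennreal_top, EReal.mul_top_of_pos (by exact_mod_cast hα)] at h
    simp at h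

theorem EReal.sub_coe_mul_coe_ennreal_le (a : EReal) (b : ℝ≥0∞) {α : ℝ} (hα : 0 ≤ α) :
    a - α * (b : EReal) ≤ a :=
  calc a - α * (b : EReal) ≤ a - 0 :=
        EReal.sub_le_sub le_rfl (mul_nonneg (EReal.coe_nonneg.2 hα) (EReal.coe_ennreal_nonneg b))
    _ = a := sub_zero a

theorem tendsto_mul_coe_ennreal_zero_of_forall_sub_mul_le {Y : Type*} {F : Y → EReal}
    {G : Y → ℝ≥0∞} {w : ℝ → Y} {c : ℝ} (hFtop : ∀ y, F y ≠ ⊤)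
    (hw : ∀ α : ℝ, 0 < α → ∀ y, F y - α * (G y : EReal) ≤ F (w α) - α * (G (w α) : EReal))
    (hc : ∀ α : ℝ, 0 < α → (c : EReal) ≤ F (w α) - α * (G (w α) : EReal)) :
    Tendsto (fun α : ℝ => (α : EReal) * (G (w α) : EReal)) atTop (𝓝 0) ∧
      Tendsto (fun α => G (w α)) atTop (𝓝 0) := by
  have hfin α (hα : 0 < α) := EReal.ne_bot_and_ne_top_of_coe_le_sub_mul hα (hc α hα)
  set f := fun α => (F (w α)).toReal
  set g := fun α => (G (w α)).toReal
  have hval : ∀ α β : ℝ, 0 < β →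
      F (w β) - α * (G (w β) : EReal) = ((f β - α * g β : ℝ) : EReal) :=
    fun α β hβ => EReal.sub_coe_mul_coe_ennreal (hfin β hβ).1 (hFtop _) (hfin β hβ).2 α
  have hαg : Tendsto (fun α => α * g α) atTop (𝓝 0) := by
    refine tendsto_mul_zero_of_forall_sub_mul_le (f := f) (c := c)
      (fun α => ENNReal.toReal_nonneg) (fun α β hα hβ => ?_) fun α hα => ?_
    · have := hw α hα (w β)
      rw [hval α β hβ, hval α α hα] at this
      exact_mod_cast this
    · have := hc α hα
      rw [hval α α hα] at this
      exact_mod_cast this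
  constructor
  · refine ((continuous_coe_real_ereal.tendsto 0).comp hαg).congr' ?_
    filter_upwards [eventually_gt_atTop 0] with α hα
    simp [g, EReal.coe_mul, EReal.coe_ennreal_toReal (hfin α hα).2]
  · have hg : Tendsto g atTop (𝓝 0) := by
      have := hαg.mul tendsto_inv_atTop_zero
      rw [zero_mul] at this
      refine this.congr' ?_
      filter_upwards [eventually_gt_atTop 0] with α hα
      field_simp
    rw [← ENNReal.ofReal_zero]
    refine (ENNReal.tendsto_ofReal hg).congr' ?_
    filter_upwards [eventually_gt_atTop 0] with α hα
    exact ENNReal.ofReal_toReal (hfin α hα).2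

section

variable {Y : Type*} [TopologicalSpace Y]

theorem UpperSemicontinuous.exists_forall_le_of_isCompact {β : Type*} [LinearOrder β]
    {f : Y → β} (hf : UpperSemicontinuous f) {y₀ : Y} (hK : IsCompact {y | f y₀ ≤ f y}) :
    ∃ w, ∀ y, f y ≤ f w := by
  obtain ⟨w, -, hw⟩ := (hf.upperSemicontinuousOn _).exists_isMaxOn ⟨y₀, le_refl (f y₀)⟩ hK
  refine ⟨w, fun y => ?_⟩
  by_cases hy : f y₀ ≤ f y
  · exact hw hy
  · exact (not_le.1 hy).le.trans (hw (le_refl (f y₀)))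

theorem UpperSemicontinuous.sub_coe_mul_coe_ennreal {F : Y → EReal} {G : Y → ℝ≥0∞}
    (hF : UpperSemicontinuous F) (hFtop : ∀ y, F y ≠ ⊤) (hG : LowerSemicontinuous G)
    {α : ℝ} (hα : 0 ≤ α) : UpperSemicontinuous fun y => F y - α * (G y : EReal) := by
  have hαG : LowerSemicontinuous fun y => (α : EReal) * (G y : EReal) := by
    have h := continuous_coe_ennreal_ereal.comp_lowerSemicontinuous
      ((ENNReal.continuous_const_mul ENNReal.ofReal_ne_top).comp_lowerSemicontinuous hG
        fun _ _ h => mul_le_mul_right h (ENNReal.ofReal α))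
      fun _ _ h => EReal.coe_ennreal_le_coe_ennreal_iff.2 h
    convert h using 2 with y
    simp [EReal.coe_ennreal_mul, EReal.coe_ennreal_ofReal, max_eq_left hα]
  simp only [sub_eq_add_neg]
  refine hF.add' (continuous_neg.comp_lowerSemicontinuous_antitone hαG
    fun _ _ h => EReal.neg_le_neg_iff.2 h) fun y =>
      EReal.continuousAt_add (.inl (hFtop y)) (.inr ?_)
  rw [Ne, EReal.neg_eq_top_iff]
  exact fun h => by
    simpa [h] using mul_nonneg (EReal.coe_nonneg.2 hα) (EReal.coe_ennreal_nonneg (G y))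

theorem exists_forall_sub_coe_mul_coe_ennreal_le {F : Y → EReal} {G : Y → ℝ≥0∞}
    (hF : UpperSemicontinuous F) (hFtop : ∀ y, F y ≠ ⊤)
    (hFcpt : ∀ c : ℝ, IsCompact {y | (c : EReal) ≤ F y}) (hG : LowerSemicontinuous G)
    {y₀ : Y} (hGy₀ : G y₀ = 0) (hFy₀ : F y₀ ≠ ⊥) {α : ℝ} (hα : 0 ≤ α) :
    ∃ w, ∀ y, F y - α * (G y : EReal) ≤ F w - α * (G w : EReal) := by
  have hΦ := hF.sub_coe_mul_coe_ennreal hFtop hG hα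
  refine hΦ.exists_forall_le_of_isCompact (y₀ := y₀) ?_
  have hΦy₀ : F y₀ - α * (G y₀ : EReal) = ((F y₀).toReal : EReal) := by
    simp [hGy₀, EReal.coe_toReal (hFtop y₀) hFy₀]
  rw [hΦy₀]
  exact (hFcpt _).of_isClosed_subset (hΦ.isClosed_preimage _)
    fun y hy => hy.trans (EReal.sub_coe_mul_coe_ennreal_le _ _ hα)

end

theorem stmt5_general {X : Type*} [MetricSpace X]
    (F : X × X → EReal) (G : X × X → ℝ≥0∞)
    (hFbdd : ∃ M : ℝ, ∀ z, F z ≤ (M : EReal))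
    (hFusc : UpperSemicontinuous F)
    (hFcpt : ∀ c : ℝ, IsCompact {z | (c : EReal) ≤ F z})
    (hGlsc : LowerSemicontinuous G)
    (hne : ∃ z, G z = 0 ∧ F z ≠ ⊥) :
    ∃ xy : ℝ → X × X,
      (∀ α : ℝ, 0 < α → ∀ z : X × X,
          F z - (α : EReal) * (G z : EReal) ≤
            F (xy α) - (α : EReal) * (G (xy α) : EReal)) ∧
      IsCompact (closure {p : X × X | ∃ α : ℝ, 0 < α ∧ xy α = p}) ∧
      (∀ z₀ : X × X, MapClusterPt z₀ atTop xy →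
          G z₀ = 0 ∧ F z₀ = sSup (F '' {z | G z = 0})) ∧
      Tendsto (fun α : ℝ => (α : EReal) * (G (xy α) : EReal)) atTop (nhds 0) := by
  obtain ⟨M, hM⟩ := hFbdd
  obtain ⟨z₀, hGz₀, hFz₀⟩ := hne
  have hFtop : ∀ z, F z ≠ ⊤ := fun z => ne_top_of_le_ne_top (EReal.coe_ne_top M) (hM z)
  have : Nonempty (X × X) := ⟨z₀⟩
  choose! w hw using fun α (hα : 0 < α) =>
    exists_forall_sub_coe_mul_coe_ennreal_le hFusc hFtop hFcpt hGlsc hGz₀ hFz₀ hα.le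
  set S := sSup (F '' {z | G z = 0})
  have hS : ∀ α : ℝ, 0 < α → S ≤ F (w α) - α * (G (w α) : EReal) := fun α hα =>
    sSup_le <| by
      rintro _ ⟨z, hz : G z = 0, rfl⟩
      simpa [hz] using hw α hα z
  have hSF : ∀ α : ℝ, 0 < α → S ≤ F (w α) := fun α hα =>
    (hS α hα).trans (EReal.sub_coe_mul_coe_ennreal_le _ _ hα.le)
  have hc₀ : ((F z₀).toReal : EReal) ≤ S :=
    (EReal.coe_toReal (hFtop z₀) hFz₀).le.trans (le_sSup ⟨z₀, hGz₀, rfl⟩)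
  obtain ⟨hαG, hG⟩ := tendsto_mul_coe_ennreal_zero_of_forall_sub_mul_le hFtop hw
    fun α hα => hc₀.trans (hS α hα)
  refine ⟨w, hw, ?_, fun z hz => ?_, hαG⟩
  · refine (hFcpt (F z₀).toReal).closure_of_subset ?_
    rintro _ ⟨α, hα, rfl⟩
    exact hc₀.trans (hSF α hα)
  have hGz : G z = 0 := le_zero_iff.1 <| le_of_forall_gt_imp_ge_of_dense fun ε hε =>
    (hGlsc.isClosed_preimage ε).mem_of_mapClusterPt hz (hG.eventually (Iic_mem_nhds hε))
  exact ⟨hGz, le_antisymm (le_sSup ⟨z, hGz, rfl⟩)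
    ((hFusc.isClosed_preimage S).mem_of_mapClusterPt hz
      ((eventually_gt_atTop 0).mono hSF))⟩

/-- Abstract doubling-of-variables lemma: maximizers of `F - αG` exist, the family
of maximizers is relatively compact, every limit point `(x₀,y₀)` as `α → ∞`
satisfies `G(x₀,y₀) = 0` and `F(x₀,y₀) = sup{F : G = 0}`, and `α G(x_α,y_α) → 0`. -/
theorem stmt5 {X : Type*} [MetricSpace X]
    (F : X × X → EReal) (G : X × X → ℝ≥0∞)
    (hFbdd : ∃ M : ℝ, ∀ z, F z ≤ (M : EReal))
    (hFusc : UpperSemicontinuous F)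
    (hFcpt : ∀ c : ℝ, IsCompact {z | (c : EReal) ≤ F z})
    (hGlsc : LowerSemicontinuous G)
    (hGdiag : ∀ x : X, G (x, x) = 0)
    (hne : ∃ z, G z = 0 ∧ F z ≠ ⊥) :
    ∃ xy : ℝ → X × X,
      (∀ α : ℝ, 0 < α → ∀ z : X × X,
          F z - (α : EReal) * (G z : EReal) ≤
            F (xy α) - (α : EReal) * (G (xy α) : EReal)) ∧
      IsCompact (closure {p : X × X | ∃ α : ℝ, 0 < α ∧ xy α = p}) ∧
      (∀ z₀ : X × X, MapClusterPt z₀ atTop xy →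
          G z₀ = 0 ∧ F z₀ = sSup (F '' {z | G z = 0})) ∧
      Tendsto (fun α : ℝ => (α : EReal) * (G (xy α) : EReal)) atTop (nhds 0) :=
  stmt5_general F G hFbdd hFusc hFcpt hGlsc hne
end

section
/- In the abstract doubling lemma setting, the map α ↦ sup_{x,y} (F(x,y) − α·G(x,y)) is nonincreasing in α, and lim_{α→∞} sup_{x,y}(F(x,y) − αG(x,y)) = sup{F(x,y) : G(x,y) = 0}. -/
/-!
Since `G ≥ 0`, the penalized supremum `sup (F - α G)` decreases in `α`, and it never drops below
`sSup (F '' {G = 0})` because the penalty vanishes on `{G = 0}`. For the upper bound fix a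
real `c` above `sSup (F '' {G = 0})`. Only points of the compact superlevel set `K = {c ≤ F}` can
push the penalized supremum above `c`; `G` does not vanish on `K` and, being lower semicontinuous,
is bounded below on `K` by some `δ > 0`. Once `α δ ≥ M - c`, where `M` bounds `F`, the penalized
supremum is at most `c`.
-/

open Filter Set
open scoped ENNReal NNReal

theorem IsCompact.exists_pos_nnreal_le {Z : Type*} [TopologicalSpace Z] {G : Z → ℝ≥0∞}
    {K : Set Z} (hK : IsCompact K) (hG : LowerSemicontinuous G) (hG0 : ∀ z ∈ K, G z ≠ 0) :
    ∃ δ : ℝ≥0, 0 < δ ∧ ∀ z ∈ K, (δ : ℝ≥0∞) ≤ G z := by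
  rcases K.eq_empty_or_nonempty with rfl | hne
  · exact ⟨1, one_pos, by simp⟩
  obtain ⟨w, hwK, hw⟩ := (hG.lowerSemicontinuousOn K).exists_isMinOn hne hK
  obtain ⟨δ, hδ0, hδw⟩ := ENNReal.lt_iff_exists_nnreal_btwn.1 (pos_iff_ne_zero.2 (hG0 w hwK))
  exact ⟨δ, mod_cast hδ0, fun z hz => hδw.le.trans (hw hz)⟩

section PenalizedSup

variable {Z : Type*} (F : Z → EReal) (G : Z → ℝ≥0∞)

noncomputable def penalizedSup (α : ℝ) : EReal :=
  ⨆ z, F z - (α : EReal) * (G z : EReal)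

theorem penalizedSup_antitone : Antitone (penalizedSup F G) := fun _ _ hαβ =>
  iSup_mono fun _ => EReal.sub_le_sub le_rfl <|
    mul_le_mul_of_nonneg_right (EReal.coe_le_coe_iff.2 hαβ) (EReal.coe_ennreal_nonneg _)

theorem sSup_image_zero_le_penalizedSup (α : ℝ) :
    sSup (F '' {z | G z = 0}) ≤ penalizedSup F G α := by
  refine sSup_le ?_
  rintro _ ⟨z, hz, rfl⟩
  refine le_iSup_of_le z ?_
  simp [show G z = 0 from hz]

variable {F G}

theorem exists_penalizedSup_le [TopologicalSpace Z] {M c : ℝ} (hM : ∀ z, F z ≤ M)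
    (hK : IsCompact {z | (c : EReal) ≤ F z}) (hG : LowerSemicontinuous G)
    (hc : ∀ z, G z = 0 → F z < c) : ∃ α, penalizedSup F G α ≤ c := by
  obtain ⟨δ, hδ, hδG⟩ := hK.exists_pos_nnreal_le hG fun z hz hGz => (hc z hGz).not_ge hz
  set α := max 0 ((M - c) / δ)
  have hα : 0 ≤ α := le_max_left _ _
  have hMα : M ≤ c + α * δ := by
    have := (div_le_iff₀ (NNReal.coe_pos.2 hδ)).1 (le_max_right 0 ((M - c) / δ))
    linarith
  refine ⟨α, iSup_le fun z => EReal.sub_le_of_le_add ?_⟩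
  by_cases hz : (c : EReal) ≤ F z
  · calc F z ≤ M := hM z
      _ ≤ ((c + α * δ : ℝ) : EReal) := EReal.coe_le_coe_iff.2 hMα
      _ = c + (α : EReal) * ((δ : ℝ≥0∞) : EReal) := by
        rw [EReal.coe_nnreal_eq_coe_real, EReal.coe_add, EReal.coe_mul]
      _ ≤ c + (α : EReal) * (G z : EReal) := by
        gcongr
        exact EReal.coe_ennreal_le_coe_ennreal_iff.2 (hδG z hz)
  · calc F z ≤ c := (not_le.1 hz).le
      _ ≤ c + (α : EReal) * (G z : EReal) :=
        le_add_of_nonneg_right (mul_nonneg (EReal.coe_nonneg.2 hα) (EReal.coe_ennreal_nonneg _))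

theorem tendsto_penalizedSup [TopologicalSpace Z] {M : ℝ} (hM : ∀ z, F z ≤ M)
    (hK : ∀ c : ℝ, IsCompact {z | (c : EReal) ≤ F z}) (hG : LowerSemicontinuous G) :
    Tendsto (penalizedSup F G) atTop (nhds (sSup (F '' {z | G z = 0}))) := by
  refine tendsto_order.2 ⟨fun a ha => Eventually.of_forall fun α =>
    ha.trans_le (sSup_image_zero_le_penalizedSup F G α), fun b hb => ?_⟩
  obtain ⟨c, hLc, hcb⟩ := EReal.exists_between_coe_real hb
  obtain ⟨α₀, hα₀⟩ := exists_penalizedSup_le hM (hK c) hG fun z hz =>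
    (le_sSup (mem_image_of_mem F hz)).trans_lt hLc
  filter_upwards [eventually_ge_atTop α₀] with α hα
  exact ((penalizedSup_antitone F G hα).trans hα₀).trans_lt hcb

end PenalizedSup

theorem stmt6_general {X : Type*} [MetricSpace X]
    (F : X × X → EReal) (G : X × X → ℝ≥0∞)
    (hFbdd : ∃ M : ℝ, ∀ z, F z ≤ (M : EReal))
    (hFcpt : ∀ c : ℝ, IsCompact {z | (c : EReal) ≤ F z})
    (hGlsc : LowerSemicontinuous G) :
    (∀ α β : ℝ, 0 ≤ α → α ≤ β →
        (⨆ z : X × X, (F z - (β : EReal) * (G z : EReal))) ≤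
          ⨆ z : X × X, (F z - (α : EReal) * (G z : EReal))) ∧
    Tendsto (fun α : ℝ => ⨆ z : X × X, (F z - (α : EReal) * (G z : EReal)))
      atTop (nhds (sSup (F '' {z | G z = 0}))) := by
  obtain ⟨M, hM⟩ := hFbdd
  exact ⟨fun _ _ _ hαβ => penalizedSup_antitone F G hαβ, tendsto_penalizedSup hM hFcpt hGlsc⟩

/-- The map `α ↦ sup_{x,y} (F(x,y) - α G(x,y))` is nonincreasing in `α ≥ 0` and
converges, as `α → ∞`, to `sup{F(x,y) : G(x,y) = 0}`. -/
theorem stmt6 {X : Type*} [MetricSpace X]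
    (F : X × X → EReal) (G : X × X → ℝ≥0∞)
    (hFbdd : ∃ M : ℝ, ∀ z, F z ≤ (M : EReal))
    (hFusc : UpperSemicontinuous F)
    (hFcpt : ∀ c : ℝ, IsCompact {z | (c : EReal) ≤ F z})
    (hGlsc : LowerSemicontinuous G)
    (hGdiag : ∀ x : X, G (x, x) = 0) :
    (∀ α β : ℝ, 0 ≤ α → α ≤ β →
        (⨆ z : X × X, (F z - (β : EReal) * (G z : EReal))) ≤
          ⨆ z : X × X, (F z - (α : EReal) * (G z : EReal))) ∧
    Tendsto (fun α : ℝ => ⨆ z : X × X, (F z - (α : EReal) * (G z : EReal)))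
      atTop (nhds (sSup (F '' {z | G z = 0}))) :=
  stmt6_general F G hFbdd hFcpt hGlsc
end

section
/- Fix velocities (μ̇, ẇ) ∈ ℝ^q × ℝ^Γ with μ̇_a = Σ_b (ẇ_{(b,a)} − ẇ_{(a,b)}) for all a. Then for any p ∈ ℝ^q × ℝ^Γ, Σ_a p_a μ̇_a + Σ_{(a,b)∈Γ} p_{(a,b)} ẇ_{(a,b)} = Σ_{(a,b)∈Γ} ẇ_{(a,b)}·(p_{(a,b)} − p_a + p_b). Consequently the Legendre transform L̂((μ,w),(μ̇,ẇ)) = sup_p { ⟨p,(μ̇,ẇ)⟩ − ℋ((μ,w),p) } equals Σ_{(a,b)∈Γ} S(ẇ_{(a,b)} | v(a,b,μ)). -/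
/-- The relative-entropy cost `S(z|v)`, extended by `+∞` for `z < 0` and for
`z > 0, v = 0`. -/
noncomputable def Sent (z v : ℝ) : EReal :=
  if z = 0 then (v : EReal)
  else if z < 0 then ⊤
  else if v = 0 then ⊤
  else ((z * Real.log (z / v) - z + v : ℝ) : EReal)

/-!
By the continuity equation the pairing `⟨p, (μ̇, ẇ)⟩` is `Σ_e ẇ_e · s_e` with
`s_e = p_{(a,b)} - p_a + p_b`, and the Hamiltonian depends on `p` only through `s` as well.
Since `p ↦ s` is onto `ℝ^Γ` (take `p_a = 0`), the Legendre transform splits into independent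
one-dimensional problems `sup_t (z t - v (eᵗ - 1)) = S(z | v)`: for `z, v > 0` the supremum is
attained at `t = log (z / v)`, for `z = 0` it is approached as `t → -∞`, and it is infinite
when `z < 0` (let `t → -∞`) or when `z > 0 = v` (let `t → ∞`).
-/

open Filter Topology Real

theorem le_iSup_of_tendsto {α β : Type*} [CompleteLattice α] [TopologicalSpace α]
    [ClosedIicTopology α] {f : β → α} {l : Filter β} [l.NeBot] {a : α}
    (h : Tendsto f l (𝓝 a)) : a ≤ ⨆ x, f x :=
  le_of_tendsto' h (le_iSup f)

@[norm_cast]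
theorem EReal.coe_finset_sum {ι : Type*} (s : Finset ι) (f : ι → ℝ) :
    ((∑ i ∈ s, f i : ℝ) : EReal) = ∑ i ∈ s, (f i : EReal) :=
  map_sum (⟨⟨Real.toEReal, EReal.coe_zero⟩, EReal.coe_add⟩ : ℝ →+ EReal) f s

theorem EReal.iSup_add_iSup {α β : Type*} (u : α → EReal) (v : β → EReal) :
    (⨆ x, u x) + ⨆ y, v y = ⨆ (x) (y), u x + v y := by
  refine le_antisymm (EReal.add_le_of_forall_lt fun a ha b hb => ?_)
    (iSup₂_le fun x y => add_le_add (le_iSup u x) (le_iSup v y))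
  obtain ⟨x, hx⟩ := lt_iSup_iff.1 ha
  obtain ⟨y, hy⟩ := lt_iSup_iff.1 hb
  exact le_iSup₂_of_le x y (add_le_add hx.le hy.le)

theorem EReal.iSup_pi_sum {ι α : Type*} [Nonempty α] (f : ι → α → EReal)
    (s : Finset ι) : ⨆ σ : ι → α, ∑ i ∈ s, f i (σ i) = ∑ i ∈ s, ⨆ t, f i t := by
  classical
  induction s using Finset.induction with
  | empty => simp
  | @insert a s ha ih =>
    rw [Finset.sum_insert ha, ← ih, EReal.iSup_add_iSup]
    refine le_antisymm (iSup_le fun σ => ?_) (iSup₂_le fun t σ => ?_)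
    · rw [Finset.sum_insert ha]
      exact le_iSup₂_of_le (σ a) σ le_rfl
    · refine le_iSup_of_le (Function.update σ a t) ?_
      rw [Finset.sum_insert ha, Function.update_self]
      refine le_of_eq (congrArg _ (Finset.sum_congr rfl fun i hi => ?_))
      rw [Function.update_of_ne (ne_of_mem_of_not_mem hi ha)]

theorem mul_sub_exp_le_sent {w V : ℝ} (hV : 0 ≤ V) (t : ℝ) :
    ((w * t - V * (exp t - 1) : ℝ) : EReal) ≤ Sent w V := by
  unfold Sent
  split_ifs with hw0 hwneg hV0
  · rw [hw0, EReal.coe_le_coe_iff]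
    nlinarith [mul_nonneg hV (exp_pos t).le]
  · exact le_top
  · exact le_top
  · have hw : 0 < w := (not_lt.1 hwneg).lt_of_ne' hw0
    have hVpos : 0 < V := hV.lt_of_ne' hV0
    have key : w * (t - log (w / V) + 1) ≤ V * exp t :=
      calc w * (t - log (w / V) + 1) ≤ w * exp (t - log (w / V)) :=
            mul_le_mul_of_nonneg_left (add_one_le_exp _) hw.le
        _ = V * exp t := by rw [exp_sub, exp_log (by positivity)]; field_simp
    rw [EReal.coe_le_coe_iff]
    linarith

theorem sent_le_iSup_mul_sub_exp {w V : ℝ} (hV : 0 ≤ V) :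
    Sent w V ≤ ⨆ t : ℝ, ((w * t - V * (exp t - 1) : ℝ) : EReal) := by
  unfold Sent
  split_ifs with hw0 hwneg hV0
  · subst hw0
    refine le_iSup_of_tendsto (l := atBot) (EReal.tendsto_coe.2 ?_)
    simpa using ((tendsto_exp_atBot.sub_const 1).const_mul V).const_sub 0
  · refine le_iSup_of_tendsto (l := atBot) (EReal.tendsto_coe_nhds_top_iff.2 ?_)
    refine tendsto_atTop_mono' _ ?_ (tendsto_id.const_mul_atBot_of_neg hwneg)
    filter_upwards [eventually_le_atBot 0] with t ht
    rw [id]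
    nlinarith [mul_le_mul_of_nonneg_left (exp_le_one_iff.2 ht) hV]
  · subst hV0
    refine le_iSup_of_tendsto (l := atTop) (EReal.tendsto_coe_nhds_top_iff.2 ?_)
    simpa using tendsto_id.const_mul_atTop ((not_lt.1 hwneg).lt_of_ne' hw0)
  · refine le_iSup_of_le (log (w / V)) (le_of_eq ?_)
    have hw : 0 < w := (not_lt.1 hwneg).lt_of_ne' hw0
    have hVpos : 0 < V := hV.lt_of_ne' hV0
    rw [exp_log (div_pos hw hVpos), mul_sub, mul_div_cancel₀ _ hVpos.ne']
    congr 1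
    ring

theorem iSup_mul_sub_exp_eq_sent {w V : ℝ} (hV : 0 ≤ V) :
    ⨆ t : ℝ, ((w * t - V * (exp t - 1) : ℝ) : EReal) = Sent w V :=
  le_antisymm (iSup_le (mul_sub_exp_le_sent hV)) (sent_le_iSup_mul_sub_exp hV)

theorem sum_mul_divergence {V E : Type*} [Fintype V] [DecidableEq V] [Fintype E]
    (src tgt : E → V) (φ : V → ℝ) (w : E → ℝ) :
    ∑ a, φ a * ∑ e, ((if tgt e = a then w e else 0) - (if src e = a then w e else 0)) =
      ∑ e, w e * (φ (tgt e) - φ (src e)) := by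
  simp only [Finset.mul_sum]
  rw [Finset.sum_comm]
  refine Finset.sum_congr rfl fun e _ => ?_
  simp only [mul_sub, mul_ite, mul_zero, Finset.sum_sub_distrib, Finset.sum_ite_eq,
    Finset.mem_univ, if_true]
  ring

/-- Under the continuity equation `μ̇_a = Σ_b (ẇ_{(b,a)} - ẇ_{(a,b)})`, the linear
pairing reduces to `Σ_{(a,b)} ẇ_{(a,b)}(p_{(a,b)} - p_a + p_b)`, and the Legendre
transform of the Hamiltonian equals `Σ_{(a,b)} S(ẇ_{(a,b)} | v(a,b,μ))`. -/
theorem stmt9 (q : ℕ) (v : Edge q → ℝ) (hv : ∀ e, 0 ≤ v e)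
    (μdot : Fin q → ℝ) (wdot : Edge q → ℝ)
    (hcont : ∀ a : Fin q, μdot a =
      ∑ e : Edge q, ((if e.1.2 = a then wdot e else 0) -
        (if e.1.1 = a then wdot e else 0))) :
    (∀ p : (Fin q → ℝ) × (Edge q → ℝ),
      ∑ a, p.1 a * μdot a + ∑ e : Edge q, p.2 e * wdot e =
        ∑ e : Edge q, wdot e * (p.2 e - p.1 e.1.1 + p.1 e.1.2)) ∧
    (⨆ p : (Fin q → ℝ) × (Edge q → ℝ),
        ((∑ a, p.1 a * μdot a + ∑ e : Edge q, p.2 e * wdot e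
          - ∑ e : Edge q, v e * (Real.exp (p.1 e.1.2 - p.1 e.1.1 + p.2 e) - 1)
            : ℝ) : EReal)) =
      ∑ e : Edge q, Sent (wdot e) (v e) := by
  have hpair : ∀ p : (Fin q → ℝ) × (Edge q → ℝ),
      ∑ a, p.1 a * μdot a + ∑ e : Edge q, p.2 e * wdot e =
        ∑ e : Edge q, wdot e * (p.2 e - p.1 e.1.1 + p.1 e.1.2) := fun p => by
    simp only [hcont, sum_mul_divergence (fun e : Edge q => e.1.1) (fun e => e.1.2),
      ← Finset.sum_add_distrib]
    exact Finset.sum_congr rfl fun e _ => by ring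
  refine ⟨hpair, ?_⟩
  let g (e : Edge q) (t : ℝ) : EReal := ((wdot e * t - v e * (exp t - 1) : ℝ) : EReal)
  have hsurj : Function.Surjective fun (p : (Fin q → ℝ) × (Edge q → ℝ)) (e : Edge q) =>
      p.1 e.1.2 - p.1 e.1.1 + p.2 e := fun s => ⟨(0, s), by simp⟩
  calc _ = ⨆ p : (Fin q → ℝ) × (Edge q → ℝ), ∑ e, g e (p.1 e.1.2 - p.1 e.1.1 + p.2 e) := by
        refine iSup_congr fun p => ?_
        rw [hpair, ← Finset.sum_sub_distrib, EReal.coe_finset_sum]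
        exact Finset.sum_congr rfl fun e _ => by simp only [g]; congr 1; ring
    _ = ⨆ s : Edge q → ℝ, ∑ e, g e (s e) := hsurj.iSup_comp fun s => ∑ e, g e (s e)
    _ = ∑ e, ⨆ t, g e t := EReal.iSup_pi_sum g _
    _ = ∑ e, Sent (wdot e) (v e) := Finset.sum_congr rfl fun e _ => iSup_mul_sub_exp_eq_sent (hv e)
end

section
/- The Legendre transform L̂((μ,w),(μ̇,ẇ)) = sup_p { Σ_a p_a μ̇_a + Σ_{(a,b)} p_{(a,b)} ẇ_{(a,b)} − ℋ((μ,w),p) } equals +∞ whenever there exists a state a with μ̇_a ≠ Σ_b (ẇ_{(b,a)} − ẇ_{(a,b)}). -/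
open Finset Set

theorem EReal.iSup_coe_eq_top_of_not_bddAbove {ι : Sort*} {f : ι → ℝ}
    (h : ¬BddAbove (range f)) : ⨆ i, (f i : EReal) = ⊤ := by
  refine iSup_eq_top.2 fun b hb => ?_
  obtain ⟨r, hbr, -⟩ := EReal.lt_iff_exists_real_btwn.1 hb
  obtain ⟨_, ⟨i, rfl⟩, hri⟩ := not_bddAbove_iff.1 h r
  exact ⟨i, hbr.trans (EReal.coe_lt_coe_iff.2 hri)⟩

section Gauge

variable {V E : Type*} [Fintype E] [DecidableEq V]

noncomputable def hamiltonian (src tgt : E → V) (v : E → ℝ) (p : (V → ℝ) × (E → ℝ)) : ℝ :=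
  ∑ e, v e * (Real.exp (p.1 (tgt e) - p.1 (src e) + p.2 e) - 1)

def gaugeDirection (src tgt : E → V) (a : V) : (V → ℝ) × (E → ℝ) :=
  (fun b => if b = a then 1 else 0,
    fun e => (if src e = a then 1 else 0) - (if tgt e = a then 1 else 0))

theorem hamiltonian_add_smul_gaugeDirection (src tgt : E → V) (v : E → ℝ)
    (p : (V → ℝ) × (E → ℝ)) (a : V) (t : ℝ) :
    hamiltonian src tgt v (p + t • gaugeDirection src tgt a) = hamiltonian src tgt v p := by
  refine sum_congr rfl fun e _ => ?_
  simp only [gaugeDirection, Prod.fst_add, Prod.snd_add, Prod.smul_fst, Prod.smul_snd,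
    Pi.add_apply, Pi.smul_apply, smul_eq_mul]
  ring_nf

def netInflow (src tgt : E → V) (w : E → ℝ) (a : V) : ℝ :=
  ∑ e, ((if tgt e = a then w e else 0) - (if src e = a then w e else 0))

variable [Fintype V]

noncomputable def legendreObjective (src tgt : E → V) (v : E → ℝ) (μ : V → ℝ) (w : E → ℝ)
    (p : (V → ℝ) × (E → ℝ)) : ℝ :=
  ∑ b, p.1 b * μ b + ∑ e, p.2 e * w e - hamiltonian src tgt v p

theorem pairing_gaugeDirection (src tgt : E → V) (a : V) (μ : V → ℝ) (w : E → ℝ) :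
    ∑ b, (gaugeDirection src tgt a).1 b * μ b + ∑ e, (gaugeDirection src tgt a).2 e * w e
      = μ a - netInflow src tgt w a := by
  have hV : ∑ b, (gaugeDirection src tgt a).1 b * μ b = μ a := by simp [gaugeDirection]
  have hE : ∑ e, (gaugeDirection src tgt a).2 e * w e = -netInflow src tgt w a := by
    rw [netInflow, ← sum_neg_distrib]
    refine sum_congr rfl fun e _ => ?_
    simp only [gaugeDirection]
    split_ifs <;> ring
  rw [hV, hE, sub_eq_add_neg]

theorem legendreObjective_smul_gaugeDirection (src tgt : E → V) (v : E → ℝ) (μ : V → ℝ)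
    (w : E → ℝ) (a : V) (t : ℝ) :
    legendreObjective src tgt v μ w (t • gaugeDirection src tgt a)
      = t * (μ a - netInflow src tgt w a) := by
  have hH : hamiltonian src tgt v (t • gaugeDirection src tgt a) = 0 := by
    simpa [hamiltonian] using hamiltonian_add_smul_gaugeDirection src tgt v 0 a t
  simp only [legendreObjective, hH, sub_zero, Prod.smul_fst, Prod.smul_snd, Pi.smul_apply,
    smul_eq_mul, mul_assoc, ← mul_sum, ← mul_add, pairing_gaugeDirection]

theorem iSup_legendreObjective_eq_top (src tgt : E → V) (v : E → ℝ) (μ : V → ℝ) (w : E → ℝ)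
    (hfail : ∃ a, μ a ≠ netInflow src tgt w a) :
    ⨆ p, (legendreObjective src tgt v μ w p : EReal) = ⊤ := by
  obtain ⟨a, ha⟩ := hfail
  set c := μ a - netInflow src tgt w a
  have hc : c ≠ 0 := sub_ne_zero.2 ha
  refine EReal.iSup_coe_eq_top_of_not_bddAbove (not_bddAbove_iff.2 fun x => ?_)
  refine ⟨_, ⟨((x + 1) / c) • gaugeDirection src tgt a, rfl⟩, ?_⟩
  rw [legendreObjective_smul_gaugeDirection, div_mul_cancel₀ _ hc]
  exact lt_add_one x

end Gauge

theorem stmt10_general (q : ℕ) (v : Edge q → ℝ)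
    (μdot : Fin q → ℝ) (wdot : Edge q → ℝ)
    (hfail : ∃ a : Fin q, μdot a ≠
      ∑ e : Edge q, ((if e.1.2 = a then wdot e else 0) -
        (if e.1.1 = a then wdot e else 0))) :
    (⨆ p : (Fin q → ℝ) × (Edge q → ℝ),
        ((∑ a, p.1 a * μdot a + ∑ e : Edge q, p.2 e * wdot e
          - ∑ e : Edge q, v e * (Real.exp (p.1 e.1.2 - p.1 e.1.1 + p.2 e) - 1)
            : ℝ) : EReal)) = ⊤ :=
  iSup_legendreObjective_eq_top (V := Fin q) (E := Edge q) (fun e => e.1.1) (fun e => e.1.2)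
    v μdot wdot hfail

/-- If the continuity equation fails at some state `a`, then the Legendre
transform of the Hamiltonian is `+∞`. -/
theorem stmt10 (q : ℕ) (v : Edge q → ℝ) (hv : ∀ e, 0 ≤ v e)
    (μdot : Fin q → ℝ) (wdot : Edge q → ℝ)
    (hfail : ∃ a : Fin q, μdot a ≠
      ∑ e : Edge q, ((if e.1.2 = a then wdot e else 0) -
        (if e.1.1 = a then wdot e else 0))) :
    (⨆ p : (Fin q → ℝ) × (Edge q → ℝ),
        ((∑ a, p.1 a * μdot a + ∑ e : Edge q, p.2 e * wdot e
          - ∑ e : Edge q, v e * (Real.exp (p.1 e.1.2 - p.1 e.1.1 + p.2 e) - 1)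
            : ℝ) : EReal)) = ⊤ :=
  stmt10_general q v μdot wdot hfail
end

section
/- Let u be bounded upper semicontinuous and v bounded lower semicontinuous on a metric space X, Ψ₁, Ψ₂ : X² → [0,∞) continuous with Ψᵢ(x,y) = 0 iff x = y, and Υ : X → [0,∞) continuous with compact sublevel sets. Fix ε > 0. Then there is a compact K_ε ⊆ X such that for every α = (α₁,α₂) ∈ (0,∞)², the function Φ_α(x,y) = u(x)/(1−ε) − v(y)/(1+ε) − α₁Ψ₁(x,y) − α₂Ψ₂(x,y) − (ε/(1−ε))Υ(x) − (ε/(1+ε))Υ(y) attains its supremum over X² at some point (x_{α,ε}, y_{α,ε}) ∈ K_ε × K_ε. -/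
/-!
Bounding `u` and `v` by `M` and dropping the nonnegative penalties gives
`Φ_α(x, y) ≤ M/(1-ε) + M/(1+ε) - ε/(1+ε) (Υ x + Υ y)`, while on the diagonal, where the
penalties vanish, `Φ_α(x₀, x₀) ≥ -M/(1-ε) - M/(1+ε) - (ε/(1-ε) + ε/(1+ε)) Υ x₀`.
Neither bound involves `α`, so every point where `Φ_α` is at least its value at `(x₀, x₀)`
lies in `K × K` for one fixed sublevel set `K` of `Υ`. The upper semicontinuous `Φ_α`
attains its maximum on the compact `K × K`, and that maximum is global.
-/

theorem UpperSemicontinuous.exists_forall_le_of_superlevel_subset {α β : Type*}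
    [TopologicalSpace α] [LinearOrder β] [TopologicalSpace β] [ClosedIicTopology β]
    {f : α → β} (hf : UpperSemicontinuous f) {K : Set α} (hK : IsCompact K) {a : α}
    (ha : ∀ p, f a ≤ f p → p ∈ K) : ∃ p ∈ K, ∀ q, f q ≤ f p := by
  obtain ⟨p, hpK, hp⟩ := (hf.upperSemicontinuousOn K).exists_isMaxOn ⟨a, ha a le_rfl⟩ hK
  refine ⟨p, hpK, fun q => ?_⟩
  rcases le_or_gt (f a) (f q) with haq | hqa
  · exact hp (ha q haq)
  · exact hqa.le.trans (hp (ha a le_rfl))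

section DoubledFunctional

variable {X : Type*} (u v Υ : X → ℝ) (Ψ₁ Ψ₂ : X → X → ℝ) (ε α₁ α₂ : ℝ)

/-- The paper's `Φ_α`, as a function on `X × X`. -/
noncomputable def doubledFunctional (p : X × X) : ℝ :=
  u p.1 / (1 - ε) - v p.2 / (1 + ε) - α₁ * Ψ₁ p.1 p.2 - α₂ * Ψ₂ p.1 p.2
    - (ε / (1 - ε)) * Υ p.1 - (ε / (1 + ε)) * Υ p.2

variable {u v Υ Ψ₁ Ψ₂ ε α₁ α₂}

theorem upperSemicontinuous_doubledFunctional [TopologicalSpace X]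
    (hu : UpperSemicontinuous u) (hv : LowerSemicontinuous v) (hΥ : Continuous Υ)
    (hΨ₁ : Continuous fun p : X × X => Ψ₁ p.1 p.2)
    (hΨ₂ : Continuous fun p : X × X => Ψ₂ p.1 p.2) (hε_ge : -1 ≤ ε) (hε_le : ε ≤ 1) :
    UpperSemicontinuous (doubledFunctional u v Υ Ψ₁ Ψ₂ ε α₁ α₂) := by
  have hu' : UpperSemicontinuous fun x => u x / (1 - ε) :=
    (continuous_id.div_const _).comp_upperSemicontinuous hu
      fun _ _ h => div_le_div_of_nonneg_right h (by linarith)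
  have hv' : UpperSemicontinuous fun y => -v y / (1 + ε) :=
    (continuous_neg.div_const _).comp_lowerSemicontinuous_antitone hv
      fun _ _ h => div_le_div_of_nonneg_right (neg_le_neg h) (by linarith)
  have hrest : Continuous fun p : X × X => -(α₁ * Ψ₁ p.1 p.2) - α₂ * Ψ₂ p.1 p.2
      - (ε / (1 - ε)) * Υ p.1 - (ε / (1 + ε)) * Υ p.2 := by fun_prop
  have hΦ : doubledFunctional u v Υ Ψ₁ Ψ₂ ε α₁ α₂ =
      fun p => (u p.1 / (1 - ε) + -v p.2 / (1 + ε)) + (-(α₁ * Ψ₁ p.1 p.2) - α₂ * Ψ₂ p.1 p.2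
        - (ε / (1 - ε)) * Υ p.1 - (ε / (1 + ε)) * Υ p.2) := by
    funext p
    simp only [doubledFunctional]
    ring
  rw [hΦ]
  exact ((hu'.comp continuous_fst).add (hv'.comp continuous_snd)).add hrest.upperSemicontinuous

theorem doubledFunctional_le {M : ℝ} (hu : ∀ x, u x ≤ M) (hv : ∀ y, -M ≤ v y)
    (hΥ : ∀ x, 0 ≤ Υ x) (hΨ₁ : ∀ x y, 0 ≤ Ψ₁ x y) (hΨ₂ : ∀ x y, 0 ≤ Ψ₂ x y)
    (hα₁ : 0 ≤ α₁) (hα₂ : 0 ≤ α₂) (hε₀ : 0 ≤ ε) (hε₁ : ε < 1) (x y : X) :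
    doubledFunctional u v Υ Ψ₁ Ψ₂ ε α₁ α₂ (x, y) ≤
      M / (1 - ε) + M / (1 + ε) - ε / (1 + ε) * (Υ x + Υ y) := by
  have h₁ : u x / (1 - ε) ≤ M / (1 - ε) := div_le_div_of_nonneg_right (hu x) (by linarith)
  have h₂ : -(M / (1 + ε)) ≤ v y / (1 + ε) := by rw [← neg_div]; gcongr; exact hv y
  have h₃ : ε / (1 + ε) * Υ x ≤ ε / (1 - ε) * Υ x := by gcongr <;> linarith [hΥ x]
  have h₄ : 0 ≤ α₁ * Ψ₁ x y + α₂ * Ψ₂ x y :=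
    add_nonneg (mul_nonneg hα₁ (hΨ₁ x y)) (mul_nonneg hα₂ (hΨ₂ x y))
  simp only [doubledFunctional]
  linarith

theorem doubledFunctional_diag (hΨ₁ : ∀ x, Ψ₁ x x = 0) (hΨ₂ : ∀ x, Ψ₂ x x = 0) (x : X) :
    doubledFunctional u v Υ Ψ₁ Ψ₂ ε α₁ α₂ (x, x) =
      u x / (1 - ε) - v x / (1 + ε) - (ε / (1 - ε) + ε / (1 + ε)) * Υ x := by
  simp only [doubledFunctional, hΨ₁, hΨ₂]
  ring

theorem add_le_of_doubledFunctional_diag_le {M : ℝ} (hu : ∀ x, |u x| ≤ M) (hv : ∀ x, |v x| ≤ M)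
    (hΥ : ∀ x, 0 ≤ Υ x) (hΨ₁ : ∀ x y, 0 ≤ Ψ₁ x y) (hΨ₂ : ∀ x y, 0 ≤ Ψ₂ x y)
    (hΨ₁d : ∀ x, Ψ₁ x x = 0) (hΨ₂d : ∀ x, Ψ₂ x x = 0) (hα₁ : 0 ≤ α₁) (hα₂ : 0 ≤ α₂)
    (hε₀ : 0 < ε) (hε₁ : ε < 1) {x₀ x y : X}
    (h : doubledFunctional u v Υ Ψ₁ Ψ₂ ε α₁ α₂ (x₀, x₀) ≤
      doubledFunctional u v Υ Ψ₁ Ψ₂ ε α₁ α₂ (x, y)) :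
    Υ x + Υ y ≤ (4 * M / ε + 2 * Υ x₀) / (1 - ε) := by
  have hε₁' : 0 < 1 - ε := by linarith
  have hup := doubledFunctional_le (fun x => (abs_le.1 (hu x)).2) (fun y => (abs_le.1 (hv y)).1)
    hΥ hΨ₁ hΨ₂ hα₁ hα₂ hε₀.le hε₁ x y
  have h₁ : -(M / (1 - ε)) ≤ u x₀ / (1 - ε) := by
    rw [← neg_div]; gcongr; exact (abs_le.1 (hu x₀)).1
  have h₂ : v x₀ / (1 + ε) ≤ M / (1 + ε) := by gcongr; exact (abs_le.1 (hv x₀)).2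
  rw [doubledFunctional_diag hΨ₁d hΨ₂d] at h
  have hbound :
      ε / (1 + ε) * (Υ x + Υ y) ≤ ε / (1 + ε) * ((4 * M / ε + 2 * Υ x₀) / (1 - ε)) := by
    have hrhs : ε / (1 + ε) * ((4 * M / ε + 2 * Υ x₀) / (1 - ε)) =
        2 * (M / (1 - ε) + M / (1 + ε)) + (ε / (1 - ε) + ε / (1 + ε)) * Υ x₀ := by
      field_simp
      ring
    rw [hrhs]
    linarith
  exact le_of_mul_le_mul_left hbound (by positivity)

end DoubledFunctional

/-- Two-penalization lemma, existence of maximizers: for `u` bounded USC, `v`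
bounded LSC, good penalization functions `Ψ₁, Ψ₂` and a containment function `Υ`
with compact sublevel sets, there is a compact set `K_ε` such that for every
`α = (α₁,α₂) ∈ (0,∞)²` the doubled functional attains its supremum at a point of
`K_ε × K_ε`. -/
theorem stmt15 {X : Type*} [MetricSpace X] [Nonempty X]
    (u v : X → ℝ) (M : ℝ) (hub : ∀ x, |u x| ≤ M) (hvb : ∀ x, |v x| ≤ M)
    (husc : UpperSemicontinuous u) (hlsc : LowerSemicontinuous v)
    (Ψ₁ Ψ₂ : X → X → ℝ)
    (hΨ₁c : Continuous fun p : X × X => Ψ₁ p.1 p.2)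
    (hΨ₂c : Continuous fun p : X × X => Ψ₂ p.1 p.2)
    (hΨ₁nn : ∀ x y, 0 ≤ Ψ₁ x y) (hΨ₂nn : ∀ x y, 0 ≤ Ψ₂ x y)
    (hΨ₁0 : ∀ x y, (Ψ₁ x y = 0 ↔ x = y)) (hΨ₂0 : ∀ x y, (Ψ₂ x y = 0 ↔ x = y))
    (Υ : X → ℝ) (hΥc : Continuous Υ) (hΥnn : ∀ x, 0 ≤ Υ x)
    (hΥcpt : ∀ c : ℝ, IsCompact {x | Υ x ≤ c})
    (ε : ℝ) (hε0 : 0 < ε) (hε1 : ε < 1) :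
    ∃ K : Set X, IsCompact K ∧ ∀ α₁ α₂ : ℝ, 0 < α₁ → 0 < α₂ →
      ∃ x y : X, x ∈ K ∧ y ∈ K ∧ ∀ x' y' : X,
        u x' / (1 - ε) - v y' / (1 + ε) - α₁ * Ψ₁ x' y' - α₂ * Ψ₂ x' y'
            - (ε / (1 - ε)) * Υ x' - (ε / (1 + ε)) * Υ y' ≤
          u x / (1 - ε) - v y / (1 + ε) - α₁ * Ψ₁ x y - α₂ * Ψ₂ x y
            - (ε / (1 - ε)) * Υ x - (ε / (1 + ε)) * Υ y := by
  obtain ⟨x₀⟩ := ‹Nonempty X›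
  set c := (4 * M / ε + 2 * Υ x₀) / (1 - ε)
  refine ⟨{x | Υ x ≤ c}, hΥcpt c, fun α₁ α₂ hα₁ hα₂ => ?_⟩
  set Φ := doubledFunctional u v Υ Ψ₁ Ψ₂ ε α₁ α₂
  have hΦ : UpperSemicontinuous Φ :=
    upperSemicontinuous_doubledFunctional husc hlsc hΥc hΨ₁c hΨ₂c (by linarith) hε1.le
  have htrap : ∀ p, Φ (x₀, x₀) ≤ Φ p → p ∈ {x | Υ x ≤ c} ×ˢ {x | Υ x ≤ c} := fun p hp => by
    have hsum := add_le_of_doubledFunctional_diag_le hub hvb hΥnn hΨ₁nn hΨ₂nn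
      (fun x => (hΨ₁0 x x).2 rfl) (fun x => (hΨ₂0 x x).2 rfl) hα₁.le hα₂.le hε0 hε1 hp
    exact ⟨(le_add_of_nonneg_right (hΥnn p.2)).trans hsum,
      (le_add_of_nonneg_left (hΥnn p.1)).trans hsum⟩
  obtain ⟨p, ⟨hp₁, hp₂⟩, hp⟩ :=
    hΦ.exists_forall_le_of_superlevel_subset ((hΥcpt c).prod (hΥcpt c)) htrap
  exact ⟨p.1, p.2, hp₁, hp₂, fun x' y' => hp (x', y')⟩
end

section
/- In the setting of the two-penalization lemma, for fixed ε > 0 and α₂ > 0, along any sequence α₁ → ∞ the maximizers (x_{(α₁,α₂),ε}, y_{(α₁,α₂),ε}) have limit points (x_{α₂,ε}, y_{α₂,ε}) in K_ε satisfying Ψ₁(x_{α₂,ε}, y_{α₂,ε}) = 0, and moreover α₁·Ψ₁(x_{(α₁,α₂),ε}, y_{(α₁,α₂),ε}) → 0 as α₁ → ∞. -/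
/-!
Write `Φ_a = F - a G` with `G = Ψ₁ ≥ 0` and let `m a = Φ_a(z_a)` be the maximal value. Comparing
`Φ_a` at the maximizer `z_b` of `Φ_b` gives `m b + (b - a) G(z_b) ≤ m a` for `a ≤ b`, so `m` is
nonincreasing, and it is bounded below by `Φ_a(w, w) = F(w, w)`. Hence `m` converges, and taking
`a = b / 2` yields `b G(z_b) ≤ 2 (m (b / 2) - m b) → 0`. In particular `G(z_b) → 0`, so `Ψ₁`
vanishes at every cluster point by continuity, and cluster points exist in the compact set `K`.
-/

open Filter Set Topology

theorem MapClusterPt.eq_of_tendsto {α Y : Type*} [TopologicalSpace Y] [T2Space Y] {l : Filter α}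
    {f : α → Y} {y z : Y} (hy : MapClusterPt y l f) (hz : Tendsto f l (𝓝 z)) : y = z :=
  eq_of_nhds_neBot (hy.neBot.mono (inf_le_inf_left _ hz))

theorem AntitoneOn.exists_tendsto_atTop_of_bddBelow {f : ℝ → ℝ} {c : ℝ}
    (hf : AntitoneOn f (Ioi c)) (hbdd : BddBelow (f '' Ioi c)) :
    ∃ L, Tendsto f atTop (𝓝 L) := by
  set g : ℝ → ℝ := fun a => f (max a (c + 1))
  have hmem : ∀ a, max a (c + 1) ∈ Ioi c := fun a => by simp
  have hg : Antitone g := fun a b hab =>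
    hf (hmem a) (hmem b) (max_le_max hab le_rfl)
  have hgbdd : BddBelow (range g) :=
    hbdd.mono (range_subset_iff.2 fun a => mem_image_of_mem f (hmem a))
  refine ⟨⨅ a, g a, (tendsto_atTop_ciInf hg hgbdd).congr' ?_⟩
  filter_upwards [eventually_ge_atTop (c + 1)] with a ha
  simp only [g, max_eq_left ha]

section Penalization

variable {Z : Type*} {F G : Z → ℝ} {z : ℝ → Z}

theorem penalized_max_add_le
    (hmax : ∀ a : ℝ, 0 < a → ∀ w, F w - a * G w ≤ F (z a) - a * G (z a))
    {a : ℝ} (ha : 0 < a) (b : ℝ) :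
    F (z b) - b * G (z b) + (b - a) * G (z b) ≤ F (z a) - a * G (z a) := by
  linarith [hmax a ha (z b)]

theorem exists_tendsto_penalized_max (hG : ∀ w, 0 ≤ G w)
    (hmax : ∀ a : ℝ, 0 < a → ∀ w, F w - a * G w ≤ F (z a) - a * G (z a))
    {w₀ : Z} (hw₀ : G w₀ = 0) :
    ∃ L, Tendsto (fun a => F (z a) - a * G (z a)) atTop (𝓝 L) := by
  refine AntitoneOn.exists_tendsto_atTop_of_bddBelow (c := 0) ?_ ⟨F w₀, ?_⟩
  · intro a ha b _ hab
    nlinarith [penalized_max_add_le hmax ha b, hG (z b)]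
  · rintro _ ⟨a, ha, rfl⟩
    simpa [hw₀] using hmax a ha w₀

theorem tendsto_mul_penalty_atTop (hG : ∀ w, 0 ≤ G w)
    (hmax : ∀ a : ℝ, 0 < a → ∀ w, F w - a * G w ≤ F (z a) - a * G (z a))
    {w₀ : Z} (hw₀ : G w₀ = 0) :
    Tendsto (fun a => a * G (z a)) atTop (𝓝 0) := by
  set m : ℝ → ℝ := fun a => F (z a) - a * G (z a)
  obtain ⟨L, hm⟩ := exists_tendsto_penalized_max hG hmax hw₀
  have hdrop : Tendsto (fun a => 2 * (m (a / 2) - m a)) atTop (𝓝 0) := by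
    simpa using ((hm.comp (tendsto_id.atTop_div_const two_pos)).sub hm).const_mul 2
  refine tendsto_of_tendsto_of_tendsto_of_le_of_le' tendsto_const_nhds hdrop ?_ ?_
  · filter_upwards [eventually_ge_atTop 0] with a ha
    exact mul_nonneg ha (hG _)
  · filter_upwards [eventually_gt_atTop 0] with a ha
    have := penalized_max_add_le hmax (half_pos ha) a
    simp only [m]
    linarith

end Penalization

theorem tendsto_of_tendsto_mul_atTop {g : ℝ → ℝ}
    (hg : Tendsto (fun a => a * g a) atTop (𝓝 0)) : Tendsto g atTop (𝓝 0) := by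
  have h : Tendsto (fun a => a⁻¹ * (a * g a)) atTop (𝓝 0) := by
    simpa using tendsto_inv_atTop_zero.mul hg
  refine h.congr' ?_
  filter_upwards [eventually_ne_atTop 0] with a ha
  field_simp

theorem stmt16_general {X : Type*} [MetricSpace X]
    (u v : X → ℝ)
    (Ψ₁ Ψ₂ : X → X → ℝ)
    (hΨ₁c : Continuous fun p : X × X => Ψ₁ p.1 p.2)
    (hΨ₁nn : ∀ x y, 0 ≤ Ψ₁ x y)
    (hΨ₁0 : ∀ x y, (Ψ₁ x y = 0 ↔ x = y))
    (Υ : X → ℝ)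
    (ε α₂ : ℝ)
    (x y : ℝ → X) (K : Set X) (hK : IsCompact K)
    (hmem : ∀ α₁ : ℝ, 0 < α₁ → x α₁ ∈ K ∧ y α₁ ∈ K)
    (hmax : ∀ α₁ : ℝ, 0 < α₁ → ∀ x' y' : X,
      u x' / (1 - ε) - v y' / (1 + ε) - α₁ * Ψ₁ x' y' - α₂ * Ψ₂ x' y'
          - (ε / (1 - ε)) * Υ x' - (ε / (1 + ε)) * Υ y' ≤
        u (x α₁) / (1 - ε) - v (y α₁) / (1 + ε) - α₁ * Ψ₁ (x α₁) (y α₁)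
          - α₂ * Ψ₂ (x α₁) (y α₁)
          - (ε / (1 - ε)) * Υ (x α₁) - (ε / (1 + ε)) * Υ (y α₁)) :
    (∃ p : X × X, p.1 ∈ K ∧ p.2 ∈ K ∧
        MapClusterPt p atTop fun α₁ => (x α₁, y α₁)) ∧
    (∀ p : X × X, MapClusterPt p atTop (fun α₁ => (x α₁, y α₁)) →
        Ψ₁ p.1 p.2 = 0) ∧
    Tendsto (fun α₁ : ℝ => α₁ * Ψ₁ (x α₁) (y α₁)) atTop (nhds 0) := by
  set F : X × X → ℝ := fun p => u p.1 / (1 - ε) - v p.2 / (1 + ε) - α₂ * Ψ₂ p.1 p.2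
    - (ε / (1 - ε)) * Υ p.1 - (ε / (1 + ε)) * Υ p.2
  have hlim : Tendsto (fun a => a * Ψ₁ (x a) (y a)) atTop (𝓝 0) :=
    tendsto_mul_penalty_atTop (F := F) (G := fun p => Ψ₁ p.1 p.2) (z := fun a => (x a, y a))
      (fun p => hΨ₁nn p.1 p.2) (fun a ha p => by linarith [hmax a ha p.1 p.2])
      (w₀ := (x 1, x 1)) ((hΨ₁0 _ _).2 rfl)
  refine ⟨?_, fun p hp => ?_, hlim⟩
  · have hK₂ : ∀ᶠ a in atTop, (x a, y a) ∈ K ×ˢ K := by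
      filter_upwards [eventually_gt_atTop 0] with a ha using hmem a ha
    obtain ⟨p, hp, hcp⟩ := (hK.prod hK).exists_mapClusterPt (le_principal_iff.2 hK₂)
    exact ⟨p, hp.1, hp.2, hcp⟩
  · exact (hp.continuousAt_comp hΨ₁c.continuousAt).eq_of_tendsto
      (tendsto_of_tendsto_mul_atTop hlim)

/-- Two-penalization lemma, limit points as `α₁ → ∞` for fixed `ε, α₂`: the
maximizers have limit points `(x_{α₂,ε}, y_{α₂,ε})` in `K_ε` at which `Ψ₁`
vanishes, and `α₁ Ψ₁(x_{(α₁,α₂),ε}, y_{(α₁,α₂),ε}) → 0`. -/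
theorem stmt16 {X : Type*} [MetricSpace X]
    (u v : X → ℝ) (M : ℝ) (hub : ∀ x, |u x| ≤ M) (hvb : ∀ x, |v x| ≤ M)
    (husc : UpperSemicontinuous u) (hlsc : LowerSemicontinuous v)
    (Ψ₁ Ψ₂ : X → X → ℝ)
    (hΨ₁c : Continuous fun p : X × X => Ψ₁ p.1 p.2)
    (hΨ₂c : Continuous fun p : X × X => Ψ₂ p.1 p.2)
    (hΨ₁nn : ∀ x y, 0 ≤ Ψ₁ x y) (hΨ₂nn : ∀ x y, 0 ≤ Ψ₂ x y)
    (hΨ₁0 : ∀ x y, (Ψ₁ x y = 0 ↔ x = y)) (hΨ₂0 : ∀ x y, (Ψ₂ x y = 0 ↔ x = y))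
    (Υ : X → ℝ) (hΥc : Continuous Υ) (hΥnn : ∀ x, 0 ≤ Υ x)
    (hΥcpt : ∀ c : ℝ, IsCompact {x | Υ x ≤ c})
    (ε α₂ : ℝ) (hε0 : 0 < ε) (hε1 : ε < 1) (hα₂ : 0 < α₂)
    (x y : ℝ → X) (K : Set X) (hK : IsCompact K)
    (hmem : ∀ α₁ : ℝ, 0 < α₁ → x α₁ ∈ K ∧ y α₁ ∈ K)
    (hmax : ∀ α₁ : ℝ, 0 < α₁ → ∀ x' y' : X,
      u x' / (1 - ε) - v y' / (1 + ε) - α₁ * Ψ₁ x' y' - α₂ * Ψ₂ x' y'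
          - (ε / (1 - ε)) * Υ x' - (ε / (1 + ε)) * Υ y' ≤
        u (x α₁) / (1 - ε) - v (y α₁) / (1 + ε) - α₁ * Ψ₁ (x α₁) (y α₁)
          - α₂ * Ψ₂ (x α₁) (y α₁)
          - (ε / (1 - ε)) * Υ (x α₁) - (ε / (1 + ε)) * Υ (y α₁)) :
    (∃ p : X × X, p.1 ∈ K ∧ p.2 ∈ K ∧
        MapClusterPt p atTop fun α₁ => (x α₁, y α₁)) ∧
    (∀ p : X × X, MapClusterPt p atTop (fun α₁ => (x α₁, y α₁)) →
        Ψ₁ p.1 p.2 = 0) ∧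
    Tendsto (fun α₁ : ℝ => α₁ * Ψ₁ (x α₁) (y α₁)) atTop (nhds 0) :=
  stmt16_general u v Ψ₁ Ψ₂ hΨ₁c hΨ₁nn hΨ₁0 Υ ε α₂ x y K hK hmem hmax
end
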